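/- Let m ≥ 2 be an integer, c > 0 a real, κ = m c²/(m−1), τ = (κ+1)/(m κ), and γ_1, …, γ_m ≥ 0. Set x_i = κ γ_i² for 1 ≤ i ≤ m with sorted values x_{(1)} ≤ … ≤ x_{(m)}, and let g be the associated polynomial. Suppose θ < 0 satisfies g(θ) = 0. Then for every k ∈ {1, …, m}, |θ| ≥ θ(x_{(k)}, k), where θ(x, k) denotes the unique positive root of the quadratic h(θ'; x, k) = −(k−1)x − [ m − x + (m+1−k) τ x ] θ' + θ'²; in particular |θ| ≥ m. -/

import Mathlib

/-!
Write `s = |θ|`, `x_i = κ γ_i²` and `T(s) = Σ x_i / (x_i + s)`. Since `θ < 0`, every factor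
`x_i - θ` of `g` is positive, and dividing `g(θ) = 0` by their product gives the secular
equation `m - s = (1 - τ s) T(s)`. As `0 ≤ T(s) ≤ m` and `m τ = (κ + 1) / κ > 1`, this forces
`s ≥ m`, hence `τ s > 1`. The `m + 1 - k` values `x_{(k)} ≤ … ≤ x_{(m)}` give
`T(s) ≥ (m + 1 - k) x_{(k)} / (x_{(k)} + s)`, and substituting this into
`s - m = (τ s - 1) T(s)` yields `h(s; x_{(k)}, k) ≥ 0`. A monic quadratic with nonpositive
constant term is nonnegative at a positive point only beyond its positive root.
-/

/-- `κ = m c² / (m − 1)`. -/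
noncomputable def kappa (m : ℕ) (c : ℝ) : ℝ := (m : ℝ) * c ^ 2 / ((m : ℝ) - 1)

/-- The polynomial
`g(θ) = −(m+θ) ∏ᵢ (κ γᵢ² − θ) + (κ + ((κ+1)/m) θ) Σᵢ γᵢ² ∏_{j≠i} (κ γⱼ² − θ)`. -/
noncomputable def gfun (m : ℕ) (c : ℝ) (γ : Fin m → ℝ) (θ : ℝ) : ℝ :=
  -((m : ℝ) + θ) * ∏ i, (kappa m c * γ i ^ 2 - θ) +
    (kappa m c + (kappa m c + 1) / (m : ℝ) * θ) *
      ∑ i, γ i ^ 2 * ∏ j ∈ Finset.univ.erase i, (kappa m c * γ j ^ 2 - θ)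

/-- The `i`-th smallest value (0-indexed) among `y_1, …, y_m`. -/
noncomputable def sortedVal (m : ℕ) (y : Fin m → ℝ) (i : Fin m) : ℝ := y (Tuple.sort y i)

/-- The quadratic `h(θ'; x, k) = −(k−1)x − [m − x + (m+1−k) τ x] θ' + θ'²`,
with `τ = (κ+1)/(m κ)`. -/
noncomputable def hquad (m : ℕ) (κ x : ℝ) (k : ℕ) (θ : ℝ) : ℝ :=
  -((k : ℝ) - 1) * x -
    ((m : ℝ) - x + ((m : ℝ) + 1 - (k : ℝ)) * ((κ + 1) / ((m : ℝ) * κ)) * x) * θ + θ ^ 2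

noncomputable def tau (m : ℕ) (κ : ℝ) : ℝ := (κ + 1) / ((m : ℝ) * κ)

noncomputable def secularSum {ι : Type*} [Fintype ι] (x : ι → ℝ) (s : ℝ) : ℝ :=
  ∑ i, x i / (x i + s)

lemma kappa_pos {m : ℕ} (hm : 2 ≤ m) {c : ℝ} (hc : c ≠ 0) : 0 < kappa m c := by
  have hm' : (2 : ℝ) ≤ m := by exact_mod_cast hm
  unfold kappa
  exact div_pos (by positivity) (by linarith)

lemma one_lt_mul_tau {m : ℕ} (hm : m ≠ 0) {κ : ℝ} (hκ : 0 < κ) : 1 < m * tau m κ := by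
  have hm' : (m : ℝ) ≠ 0 := Nat.cast_ne_zero.2 hm
  have h : (m : ℝ) * tau m κ = (κ + 1) / κ := by
    rw [tau]
    field_simp
  rw [h, one_lt_div hκ]
  linarith

lemma hquad_eq (m : ℕ) (κ x : ℝ) (k : ℕ) (u : ℝ) :
    hquad m κ x k u = u ^ 2 - (m - x + (m + 1 - k) * tau m κ * x) * u - (k - 1) * x := by
  rw [hquad, tau]
  ring

section Secular

variable {ι : Type*} [Fintype ι] {x : ι → ℝ} {s : ℝ}

lemma secularSum_nonneg (hx : ∀ i, 0 ≤ x i) (hs : 0 ≤ s) : 0 ≤ secularSum x s :=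
  Finset.sum_nonneg fun i _ => div_nonneg (hx i) (add_nonneg (hx i) hs)

lemma secularSum_le_card (hx : ∀ i, 0 ≤ x i) (hs : 0 ≤ s) :
    secularSum x s ≤ Fintype.card ι := by
  calc secularSum x s ≤ ∑ _i : ι, (1 : ℝ) :=
        Finset.sum_le_sum fun i _ => div_le_one_of_le₀ (by linarith) (add_nonneg (hx i) hs)
    _ = Fintype.card ι := by simp

end Secular

lemma monotoneOn_div_add_right {s : ℝ} (hs : 0 < s) :
    MonotoneOn (fun u : ℝ => u / (u + s)) (Set.Ici 0) := by
  intro a ha b hb hab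
  simp only [Set.mem_Ici] at ha hb
  rw [div_le_div_iff₀ (by linarith) (by linarith)]
  nlinarith

lemma card_sub_mul_le_sum_sortedVal {n : ℕ} (y : Fin n → ℝ) {f : ℝ → ℝ}
    (hf : MonotoneOn f (Set.range y)) (hf0 : ∀ j, 0 ≤ f (y j)) (i : Fin n) :
    ((n : ℝ) - i) * f (sortedVal n y i) ≤ ∑ j, f (y j) := by
  have hcard : ((n : ℝ) - i) = ((Finset.Ici i).card : ℝ) := by
    rw [Fin.card_Ici, Nat.cast_sub i.is_lt.le]
  calc ((n : ℝ) - i) * f (sortedVal n y i)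
      = ∑ _j ∈ Finset.Ici i, f (sortedVal n y i) := by rw [Finset.sum_const, nsmul_eq_mul, hcard]
    _ ≤ ∑ j ∈ Finset.Ici i, f (y (Tuple.sort y j)) :=
        Finset.sum_le_sum fun j hj => hf (Set.mem_range_self _) (Set.mem_range_self _)
          (Tuple.monotone_sort y (Finset.mem_Ici.1 hj))
    _ ≤ ∑ j, f (y (Tuple.sort y j)) :=
        Finset.sum_le_sum_of_subset_of_nonneg (Finset.subset_univ _) fun j _ _ => hf0 _
    _ = ∑ j, f (y j) := Equiv.sum_comp (Tuple.sort y) (fun j => f (y j))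

lemma gfun_eq_prod_mul {m : ℕ} {c : ℝ} {γ : Fin m → ℝ} {θ : ℝ}
    (hθ : ∀ i, kappa m c * γ i ^ 2 - θ ≠ 0) :
    gfun m c γ θ = (∏ i, (kappa m c * γ i ^ 2 - θ)) *
      (-(m + θ) + (kappa m c + (kappa m c + 1) / m * θ) *
        ∑ i, γ i ^ 2 / (kappa m c * γ i ^ 2 - θ)) := by
  have herase : ∀ i, ∏ j ∈ Finset.univ.erase i, (kappa m c * γ j ^ 2 - θ)
      = (∏ j, (kappa m c * γ j ^ 2 - θ)) / (kappa m c * γ i ^ 2 - θ) := fun i => by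
    rw [eq_div_iff (hθ i)]
    exact Finset.prod_erase_mul _ _ (Finset.mem_univ i)
  have hsum : ∑ i, γ i ^ 2 * ∏ j ∈ Finset.univ.erase i, (kappa m c * γ j ^ 2 - θ)
      = (∏ j, (kappa m c * γ j ^ 2 - θ)) * ∑ i, γ i ^ 2 / (kappa m c * γ i ^ 2 - θ) := by
    rw [Finset.mul_sum]
    exact Finset.sum_congr rfl fun i _ => by rw [herase]; ring
  rw [gfun, hsum]
  ring

lemma secular_eq_of_gfun_eq_zero {m : ℕ} {c : ℝ} {γ : Fin m → ℝ} {θ : ℝ}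
    (hκ : 0 < kappa m c) (hθ : θ < 0) (h : gfun m c γ θ = 0) :
    (m : ℝ) - |θ| =
      (1 - tau m (kappa m c) * |θ|) * secularSum (fun i => kappa m c * γ i ^ 2) |θ| := by
  set κ := kappa m c
  have hm : (m : ℝ) ≠ 0 := by
    rintro hm
    simp [κ, kappa, hm] at hκ
  have hpos : ∀ i, 0 < κ * γ i ^ 2 - θ := fun i => by
    have := mul_nonneg hκ.le (sq_nonneg (γ i))
    linarith
  rw [gfun_eq_prod_mul fun i => (hpos i).ne', mul_eq_zero] at h
  rcases h with hP | h
  · exact absurd hP (Finset.prod_pos fun i _ => hpos i).ne'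
  have hcoef : (1 - tau m κ * -θ) * κ = κ + (κ + 1) / m * θ := by
    rw [tau]
    field_simp
    ring
  have hsum : secularSum (fun i => κ * γ i ^ 2) (-θ) = κ * ∑ i, γ i ^ 2 / (κ * γ i ^ 2 - θ) := by
    rw [secularSum, Finset.mul_sum]
    exact Finset.sum_congr rfl fun i _ => by rw [← sub_eq_add_neg]; ring
  rw [abs_of_neg hθ, hsum, ← mul_assoc, hcoef]
  linarith

lemma le_of_sub_eq_one_sub_mul_mul {n s τ T : ℝ} (hs : 0 < s) (hτ : 1 < n * τ) (hT : 0 ≤ T)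
    (hTn : T ≤ n) (h : n - s = (1 - τ * s) * T) : n ≤ s := by
  by_contra! hsn
  have hτs : 0 < 1 - τ * s := by
    by_contra! hτs
    nlinarith [mul_nonpos_of_nonpos_of_nonneg hτs hT]
  nlinarith [mul_le_mul_of_nonneg_left hTn hτs.le]

lemma hquad_nonneg_of_secular {n k : ℕ} {κ x s T : ℝ} (hx : 0 ≤ x) (hs : 0 < s)
    (hτs : 1 < tau n κ * s) (hsec : n - s = (1 - tau n κ * s) * T)
    (htail : ((n : ℝ) + 1 - k) * (x / (x + s)) ≤ T) :
    0 ≤ hquad n κ x k s := by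
  have htail' : ((n : ℝ) + 1 - k) * x ≤ T * (x + s) := by
    have := mul_le_mul_of_nonneg_right htail (by linarith : 0 ≤ x + s)
    rwa [mul_assoc, div_mul_cancel₀ _ (by linarith)] at this
  have key : hquad n κ x k s = (tau n κ * s - 1) * (T * (x + s) - ((n : ℝ) + 1 - k) * x) := by
    rw [hquad_eq]
    linear_combination (-(x + s)) * hsec
  rw [key]
  exact mul_nonneg (by linarith) (by linarith)

lemma le_of_quadratic_nonneg {b q t s : ℝ} (hq : 0 ≤ q) (ht : 0 < t)
    (htq : t ^ 2 - b * t - q = 0) (hs : 0 < s) (hsq : 0 ≤ s ^ 2 - b * s - q) : t ≤ s := by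
  have htb : b ≤ t := by nlinarith
  by_contra! hst
  nlinarith [mul_pos (sub_pos.2 hst) (by linarith : 0 < s + t - b)]

lemma exists_pos_root_quadratic {b q : ℝ} (hq : 0 ≤ q) (hbq : 0 < b ∨ 0 < q) :
    ∃ t, 0 < t ∧ t ^ 2 - b * t - q = 0 := by
  have hD : 0 ≤ b ^ 2 + 4 * q := by positivity
  refine ⟨(b + √(b ^ 2 + 4 * q)) / 2, ?_, ?_⟩
  · have : -b < √(b ^ 2 + 4 * q) := by
      rcases le_or_gt b 0 with hb | hb
      · rw [Real.lt_sqrt (by linarith)]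
        have : 0 < q := hbq.resolve_left (by linarith)
        linarith
      · linarith [Real.sqrt_nonneg (b ^ 2 + 4 * q)]
    linarith
  · linear_combination Real.sq_sqrt hD / 4

lemma exists_pos_root_hquad {n k : ℕ} {κ x : ℝ} (hτ : 1 < n * tau n κ) (hx : 0 ≤ x)
    (hk : 1 ≤ k) : ∃ t, 0 < t ∧ hquad n κ x k t = 0 := by
  have hk' : (1 : ℝ) ≤ k := by exact_mod_cast hk
  have hq : 0 ≤ ((k : ℝ) - 1) * x := mul_nonneg (by linarith) hx
  have hn : (0 : ℝ) < n := by
    rcases (Nat.cast_nonneg n : (0 : ℝ) ≤ n).lt_or_eq with hn | hn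
    · exact hn
    · rw [← hn, zero_mul] at hτ
      linarith
  have hbq : 0 < n - x + (n + 1 - k) * tau n κ * x ∨ 0 < ((k : ℝ) - 1) * x := by
    rcases hq.lt_or_eq with hq | hq
    · exact Or.inr hq
    · left
      have hb : (n : ℝ) - x + (n + 1 - k) * tau n κ * x
          = n + x * (n * tau n κ - 1) - tau n κ * ((k - 1) * x) := by ring
      rw [hb, ← hq]
      nlinarith [mul_nonneg hx (sub_nonneg.2 hτ.le)]
  simp only [hquad_eq]
  exact exists_pos_root_quadratic hq hbq

lemma le_of_hquad_nonneg {n k : ℕ} {κ x t s : ℝ} (hx : 0 ≤ x) (hk : 1 ≤ k) (ht : 0 < t)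
    (htr : hquad n κ x k t = 0) (hs : 0 < s) (hsq : 0 ≤ hquad n κ x k s) : t ≤ s := by
  have hk' : (1 : ℝ) ≤ k := by exact_mod_cast hk
  rw [hquad_eq] at htr hsq
  exact le_of_quadratic_nonneg (mul_nonneg (by linarith) hx) ht htr hs hsq

/-- Lemma S10(d) of the paper: any negative root `θ` of `g` satisfies
`|θ| ≥ θ(x_{(k)}, k)` for every `k ∈ {1, …, m}`, where `θ(x,k)` is the unique positive
root of `h(·; x, k)` and `x_i = κ γ_i²`; in particular `|θ| ≥ m`. -/
theorem stmt14 (m : ℕ) (hm : 2 ≤ m) (c : ℝ) (hc : 0 < c)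
    (γ : Fin m → ℝ)
    (θ : ℝ) (hθ : θ < 0) (hroot : gfun m c γ θ = 0) :
    (∀ k : ℕ, ∀ _hk1 : 1 ≤ k, ∀ _hk2 : k ≤ m,
      ∃ t : ℝ,
        (0 < t ∧
          hquad m (kappa m c)
            (sortedVal m (fun i : Fin m => kappa m c * γ i ^ 2) ⟨k - 1, by omega⟩) k t = 0) ∧
        (∀ t' : ℝ, 0 < t' →
          hquad m (kappa m c)
            (sortedVal m (fun i : Fin m => kappa m c * γ i ^ 2) ⟨k - 1, by omega⟩) k t' = 0 →
          t' = t) ∧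
        t ≤ |θ|) ∧
    (m : ℝ) ≤ |θ| := by
  set κ := kappa m c
  set x : Fin m → ℝ := fun i => κ * γ i ^ 2
  have hκ : 0 < κ := kappa_pos hm hc.ne'
  have hmτ : 1 < m * tau m κ := one_lt_mul_tau (by omega) hκ
  have hx : ∀ i, 0 ≤ x i := fun i => by positivity
  have hs : 0 < |θ| := abs_pos.2 hθ.ne
  have hsec := secular_eq_of_gfun_eq_zero hκ hθ hroot
  have hmθ : (m : ℝ) ≤ |θ| := le_of_sub_eq_one_sub_mul_mul hs hmτ
    (secularSum_nonneg hx hs.le) (by simpa using secularSum_le_card hx hs.le) hsec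
  have hτs : 1 < tau m κ * |θ| := by nlinarith
  refine ⟨fun k hk1 hk2 => ?_, hmθ⟩
  have htail : ((m : ℝ) + 1 - k) * (sortedVal m x ⟨k - 1, by omega⟩ /
      (sortedVal m x ⟨k - 1, by omega⟩ + |θ|)) ≤ secularSum x |θ| := by
    have := card_sub_mul_le_sum_sortedVal x
      ((monotoneOn_div_add_right hs).mono (Set.range_subset_iff.2 hx))
      (fun j => div_nonneg (hx j) (by linarith [hx j])) ⟨k - 1, by omega⟩
    rw [secularSum]
    convert this using 2
    push_cast [hk1]
    ring
  obtain ⟨t, ht, htr⟩ := exists_pos_root_hquad hmτ (hx _) hk1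
  refine ⟨t, ⟨ht, htr⟩, fun t' ht' ht'r => ?_,
    le_of_hquad_nonneg (hx _) hk1 ht htr hs (hquad_nonneg_of_secular (hx _) hs hτs hsec htail)⟩
  exact le_antisymm (le_of_hquad_nonneg (hx _) hk1 ht' ht'r ht htr.ge)
    (le_of_hquad_nonneg (hx _) hk1 ht htr ht' ht'r.ge)
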